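/- arXiv:2011.14105 — 4 statements merged into one kernel-verified Lean document; each statement's English description precedes it below -/
import Mathlib

section
/- Let D₁, D₂ be gauge transformations in ℝ^{nd×nd} (block diagonal with blocks ±I_d) with D₁ ≠ D₂ and D₁ ≠ −D₂, and let v₁, v₂, v ∈ ℝ^d be nonzero. Then for all nonzero scalars k₁, k₂, the vector k₁ D₁(1_n ⊗ v₁) + k₂ D₂(1_n ⊗ v₂) is not of the form D(1_n ⊗ v) for any gauge transformation D. -/
/-- If `D₁ ≠ ±D₂` are gauge transformations (encoded by sign vectors
`σ₁, σ₂ ∈ {±1}ⁿ`) and `v₁, v₂, v ∈ ℝ^d` are nonzero, then for all nonzero scalars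
`k₁, k₂`, the vector `k₁ D₁(1_n ⊗ v₁) + k₂ D₂(1_n ⊗ v₂)` is not of the form
`D(1_n ⊗ v)` for any gauge transformation `D`. -/
theorem gauge_combination_not_gauge_form {n d : ℕ}
    (σ₁ σ₂ : Fin n → ℝ)
    (h₁ : ∀ i, σ₁ i = 1 ∨ σ₁ i = -1) (h₂ : ∀ i, σ₂ i = 1 ∨ σ₂ i = -1)
    (hne : σ₁ ≠ σ₂) (hne' : σ₁ ≠ -σ₂)
    (v₁ v₂ v : Fin d → ℝ) (hv₁ : v₁ ≠ 0) (hv₂ : v₂ ≠ 0) (hv : v ≠ 0)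
    (k₁ k₂ : ℝ) (hk₁ : k₁ ≠ 0) (hk₂ : k₂ ≠ 0)
    (σ : Fin n → ℝ) (hσ : ∀ i, σ i = 1 ∨ σ i = -1) :
    (fun p : Fin n × Fin d => k₁ * σ₁ p.1 * v₁ p.2 + k₂ * σ₂ p.1 * v₂ p.2)
      ≠ fun p : Fin n × Fin d => σ p.1 * v p.2 := by
  intro heq
  obtain ⟨i, hi⟩ := Function.ne_iff.mp hne
  obtain ⟨j, hj⟩ := Function.ne_iff.mp hne'
  have hji : σ₂ j = σ₁ j := by
    rcases h₁ j with h | h <;> rcases h₂ j with h' | h' <;>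
      simp [h, h', Pi.neg_apply] at hj ⊢ <;> linarith
  have hii : σ₂ i = -σ₁ i := by
    rcases h₁ i with h | h <;> rcases h₂ i with h' | h' <;>
      simp [h, h'] at hi ⊢ <;> linarith
  have Ej := fun m => congrFun heq (j, m)
  have Ei := fun m => congrFun heq (i, m)
  simp only [hji, hii] at Ej Ei
  rcases hσ j with a | a <;> rcases h₁ j with b | b <;>
    rcases hσ i with c | c <;> rcases h₁ i with e | e <;>
    simp only [a, b, c, e] at Ej Ei <;>
    first
      | · apply hv₂
          funext m
          have e1 := Ej m; have e2 := Ei m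
          have h0 : k₂ * v₂ m = 0 := by linarith
          simpa using (mul_eq_zero.mp h0).resolve_left hk₂
      | · apply hv₁
          funext m
          have e1 := Ej m; have e2 := Ei m
          have h0 : k₁ * v₁ m = 0 := by linarith
          simpa using (mul_eq_zero.mp h0).resolve_left hk₁
end

section
/- Let v₁, ..., v_r ∈ ℝ^d (2 ≤ r ≤ d) be linearly independent, and D₁,...,D_r gauge transformations with pairwise distinct sign patterns (no p ≠ q with D_p = D_q or D_p = −D_q). Then for any nonzero scalars k₁,...,k_r, the vector x = Σⱼ kⱼ Dⱼ(1_n ⊗ vⱼ) is not of the form D(1_n ⊗ v) for any gauge transformation D and any v ∈ ℝ^d. -/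
/-- Let `v₁, …, v_r ∈ ℝ^d` (`2 ≤ r ≤ d`) be linearly independent and
`D₁, …, D_r` gauge transformations (sign vectors `σ j ∈ {±1}ⁿ`) with pairwise distinct
sign patterns (no `p ≠ q` with `D_p = ±D_q`).  Then for nonzero scalars `k₁, …, k_r`,
the vector `x = Σⱼ kⱼ Dⱼ(1_n ⊗ vⱼ)` is not of the form `D(1_n ⊗ v)` for any gauge
transformation `D` and any `v ∈ ℝ^d`. -/
theorem gauge_combination_of_independent_not_gauge_form {n d r : ℕ}
    (hr : 2 ≤ r) (hrd : r ≤ d)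
    (v : Fin r → Fin d → ℝ) (hv : LinearIndependent ℝ v)
    (σ : Fin r → Fin n → ℝ) (hσ : ∀ j i, σ j i = 1 ∨ σ j i = -1)
    (hdist : ∀ p q, p ≠ q → σ p ≠ σ q ∧ σ p ≠ -σ q)
    (k : Fin r → ℝ) (hk : ∀ j, k j ≠ 0)
    (τ : Fin n → ℝ) (hτ : ∀ i, τ i = 1 ∨ τ i = -1) (w : Fin d → ℝ) :
    (fun p : Fin n × Fin d => ∑ j, k j * σ j p.1 * v j p.2)
      ≠ fun p : Fin n × Fin d => τ p.1 * w p.2 := by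
  have h01 : (⟨0, by omega⟩ : Fin r) ≠ ⟨1, by omega⟩ := by
    simp [Fin.ext_iff]
  rcases Nat.eq_zero_or_pos n with hn | hn
  · exact absurd (funext fun i : Fin n => absurd i.2 (by omega))
      (hdist _ _ h01).1
  intro h
  have heq : ∀ (i : Fin n) (a : Fin d),
      ∑ j, k j * σ j i * v j a = τ i * w a := fun i a =>
    congrFun h (i, a)
  have hτsq : ∀ i, τ i * τ i = 1 := by
    intro i; rcases hτ i with h' | h' <;> simp [h']
  have hσsq : ∀ j i, σ j i * σ j i = 1 := by
    intro j i; rcases hσ j i with h' | h' <;> simp [h']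
  -- coefficients c i j := k j * σ j i * τ i satisfy ∑ j, c i j • v j = w
  have hw : ∀ i : Fin n, ∀ a, ∑ j, (k j * σ j i * τ i) * v j a = w a := by
    intro i a
    have : (∑ j, k j * σ j i * v j a) * τ i = τ i * w a * τ i := by
      rw [heq i a]
    calc ∑ j, (k j * σ j i * τ i) * v j a
        = (∑ j, k j * σ j i * v j a) * τ i := by
          rw [Finset.sum_mul]; congr 1; ext j; ring
      _ = τ i * w a * τ i := this
      _ = w a * (τ i * τ i) := by ring
      _ = w a := by rw [hτsq]; ring
  set i0 : Fin n := ⟨0, hn⟩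
  have hconst : ∀ (i : Fin n) (j : Fin r),
      k j * σ j i * τ i = k j * σ j i0 * τ i0 := by
    intro i j
    have hzero : ∀ a, ∑ j, (k j * σ j i * τ i - k j * σ j i0 * τ i0) * v j a = 0 := by
      intro a
      have := hw i a
      have h2 := hw i0 a
      simp only [sub_mul, Finset.sum_sub_distrib]
      rw [this, h2, sub_self]
    have := Fintype.linearIndependent_iff.mp hv
      (fun j => k j * σ j i * τ i - k j * σ j i0 * τ i0)
      (by funext a; simpa using hzero a) j
    linarith [this]
  -- hence σ j i * τ i is constant in i
  have hsig : ∀ (j : Fin r) (i : Fin n), σ j i = (σ j i0 * τ i0) * τ i := by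
    intro j i
    have h1 := hconst i j
    have h2 : σ j i * τ i = σ j i0 * τ i0 := by
      have h3 : k j * (σ j i * τ i) = k j * (σ j i0 * τ i0) := by
        rw [← mul_assoc, ← mul_assoc]; exact h1
      exact mul_left_cancel₀ (hk j) h3
    calc σ j i = σ j i * (τ i * τ i) := by rw [hτsq]; ring
      _ = (σ j i * τ i) * τ i := by ring
      _ = (σ j i0 * τ i0) * τ i := by rw [h2]
  set p : Fin r := ⟨0, by omega⟩
  set q : Fin r := ⟨1, by omega⟩
  have hd := hdist p q h01
  have hcase : σ p i0 * τ i0 = σ q i0 * τ i0 ∨ σ p i0 * τ i0 = -(σ q i0 * τ i0) := by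
    rcases hσ p i0 with h1 | h1 <;> rcases hσ q i0 with h2 | h2 <;>
      rcases hτ i0 with h3 | h3 <;> simp [h1, h2, h3]
  rcases hcase with hc | hc
  · exact hd.1 (funext fun i => by rw [hsig p i, hsig q i, hc])
  · exact hd.2 (funext fun i => by
      simp only [Pi.neg_apply, hsig p i, hsig q i, hc]; ring)
end

section
/- Let G be a matrix-weighted network containing a positive-negative spanning tree (a spanning tree all of whose edge weights are positive definite or negative definite). Then any x in the null space of the matrix-valued Laplacian L satisfies, for every pair of nodes p, q, either x_p = x_q or x_p = −x_q; consequently x = D(1_n ⊗ w) for some gauge transformation D and some w ∈ ℝ^d. -/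
/-!
Expanding the quadratic form, `2 xᵀ L x = ∑ᵢ ∑ₖ sᵢₖ (xᵢ - sᵢₖ xₖ)ᵀ Aᵢₖ (xᵢ - sᵢₖ xₖ)`, and every
summand is nonnegative because `sᵢₖ Aᵢₖ` is positive semidefinite. So `L x = 0` forces every
summand to vanish; on an edge whose weight is definite this gives `xᵢ = sᵢₖ xₖ = ± xₖ`, and the
spanning tree carries this relation to all pairs of nodes.
-/

open Function Matrix

theorem Matrix.dotProduct_mulVec_eq_sum_blocks {ι κ : Type*} [Fintype ι] [Fintype κ]
    (M : Matrix (ι × κ) (ι × κ) ℝ) (x : ι × κ → ℝ) :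
    x ⬝ᵥ M *ᵥ x = ∑ i, ∑ j, curry x i ⬝ᵥ (Matrix.of fun a b => M (i, a) (j, b)) *ᵥ curry x j := by
  simp only [dotProduct, mulVec, Fintype.sum_prod_type, Finset.mul_sum, curry_apply, of_apply]
  exact Finset.sum_congr rfl fun i _ => Finset.sum_comm

theorem Matrix.eq_zero_of_dotProduct_mulVec_self_eq_zero {κ : Type*} [Fintype κ]
    {M : Matrix κ κ ℝ} (hM : M.PosDef ∨ (-M).PosDef) {v : κ → ℝ} (hv : v ⬝ᵥ M *ᵥ v = 0) :
    v = 0 := by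
  by_contra hne
  rcases hM with hM | hM
  · simpa [hv] using hM.dotProduct_mulVec_pos hne
  · simpa [neg_mulVec, hv] using hM.dotProduct_mulVec_pos hne

theorem eq_or_eq_neg_of_reflTransGen {ι V : Type*} [InvolutiveNeg V] {T : ι → ι → Prop}
    {y : ι → V} (hT : ∀ i j, T i j → y i = y j ∨ y i = -y j) {p q : ι}
    (hpq : Relation.ReflTransGen T p q) : y p = y q ∨ y p = -y q := by
  induction hpq with
  | refl => exact Or.inl rfl
  | tail _ hbc ih =>
    rcases ih with h | h <;> rcases hT _ _ hbc with h' | h'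
    · exact Or.inl (h.trans h')
    · exact Or.inr (h.trans h')
    · exact Or.inr (h.trans (congrArg Neg.neg h'))
    · exact Or.inl (by rw [h, h', neg_neg])

theorem exists_sign_smul_eq_of_forall_eq_or_eq_neg {ι V : Type*} [AddCommGroup V]
    [Module ℝ V] {y : ι → V} (hy : ∀ p q, y p = y q ∨ y p = -y q) :
    ∃ (σ : ι → ℝ) (w : V), (∀ i, σ i = 1 ∨ σ i = -1) ∧ ∀ i, y i = σ i • w := by
  classical
  rcases isEmpty_or_nonempty ι with _ | ⟨⟨i₀⟩⟩
  · exact ⟨fun _ => 1, 0, fun i => Or.inl rfl, fun i => isEmptyElim i⟩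
  refine ⟨fun i => if y i = y i₀ then 1 else -1, y i₀, fun i => ?_, fun i => ?_⟩
  · by_cases h : y i = y i₀ <;> simp [h]
  · by_cases h : y i = y i₀
    · simp [h]
    · simpa [h] using (hy i i₀).resolve_left h

section SignedLaplacian

variable {ι κ : Type*} [Fintype ι] [DecidableEq ι] [Fintype κ]

/-- The block Laplacian whose diagonal blocks are `∑ₖ |Aᵢₖ|`, with `|Aᵢₖ|` written as `sᵢₖ Aᵢₖ`. -/
def signedLaplacian (s : ι → ι → ℝ) (A : ι → ι → Matrix κ κ ℝ) :
    Matrix (ι × κ) (ι × κ) ℝ :=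
  Matrix.of fun p q =>
    if p.1 = q.1 then (∑ k, s p.1 k • A p.1 k) p.2 q.2 else -(A p.1 q.1 p.2 q.2)

def edgeEnergy (s : ι → ι → ℝ) (A : ι → ι → Matrix κ κ ℝ) (x : ι × κ → ℝ) (i k : ι) : ℝ :=
  s i k * ((curry x i - s i k • curry x k) ⬝ᵥ A i k *ᵥ (curry x i - s i k • curry x k))

variable (s : ι → ι → ℝ) (A : ι → ι → Matrix κ κ ℝ) (x : ι × κ → ℝ)

omit [Fintype κ] in
theorem signedLaplacian_block (hA : ∀ i, A i i = 0) (i j : ι) :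
    (Matrix.of fun a b => signedLaplacian s A (i, a) (j, b)) =
      (if i = j then ∑ k, s i k • A i k else 0) - A i j := by
  ext a b
  by_cases h : i = j
  · subst h
    simp [signedLaplacian, hA]
  · simp [signedLaplacian, h]

theorem dotProduct_signedLaplacian_mulVec (hA : ∀ i, A i i = 0) :
    x ⬝ᵥ signedLaplacian s A *ᵥ x =
      ∑ i, ∑ k, (s i k * (curry x i ⬝ᵥ A i k *ᵥ curry x i) - curry x i ⬝ᵥ A i k *ᵥ curry x k) := by
  rw [dotProduct_mulVec_eq_sum_blocks]
  simp only [signedLaplacian_block s A hA, sub_mulVec, dotProduct_sub, Finset.sum_sub_distrib]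
  congr 1
  refine Finset.sum_congr rfl fun i _ => ?_
  rw [Fintype.sum_eq_single i fun j hj => by simp [Ne.symm hj], if_pos rfl, sum_mulVec,
    dotProduct_sum]
  simp only [smul_mulVec, dotProduct_smul, smul_eq_mul]

omit [Fintype ι] [DecidableEq ι] in
theorem add_swap_eq_edgeEnergy {i k : ι} (hA : A k i = A i k) (hs : s k i = s i k)
    (hsq : s i k ^ 2 = 1 ∨ A i k = 0) :
    (s i k * (curry x i ⬝ᵥ A i k *ᵥ curry x i) - curry x i ⬝ᵥ A i k *ᵥ curry x k)
      + (s k i * (curry x k ⬝ᵥ A k i *ᵥ curry x k) - curry x k ⬝ᵥ A k i *ᵥ curry x i) =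
      edgeEnergy s A x i k := by
  rw [hA, hs]
  rcases hsq with hsq | h0
  · simp only [edgeEnergy, mulVec_sub, mulVec_smul, dotProduct_sub, sub_dotProduct,
      dotProduct_smul, smul_dotProduct, smul_eq_mul]
    linear_combination (curry x k ⬝ᵥ A i k *ᵥ curry x i + curry x i ⬝ᵥ A i k *ᵥ curry x k
      - s i k * (curry x k ⬝ᵥ A i k *ᵥ curry x k)) * hsq
  · simp [edgeEnergy, h0]

omit [Fintype ι] [DecidableEq ι] in
theorem edgeEnergy_nonneg {i k : ι}
    (h : (s i k = 1 ∧ (A i k).PosSemidef) ∨ (s i k = -1 ∧ (-(A i k)).PosSemidef) ∨ A i k = 0) :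
    0 ≤ edgeEnergy s A x i k := by
  rcases h with ⟨hs, hPSD⟩ | ⟨hs, hPSD⟩ | h0
  · simpa [edgeEnergy, hs] using hPSD.dotProduct_mulVec_nonneg (curry x i - curry x k)
  · simpa [edgeEnergy, hs, neg_mulVec] using hPSD.dotProduct_mulVec_nonneg (curry x i + curry x k)
  · simp [edgeEnergy, h0]

theorem two_mul_dotProduct_signedLaplacian_mulVec (hA : ∀ i, A i i = 0)
    (hAsymm : ∀ i k, A i k = A k i) (hssymm : ∀ i k, s i k = s k i)
    (hsq : ∀ i k, s i k ^ 2 = 1 ∨ A i k = 0) :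
    2 * (x ⬝ᵥ signedLaplacian s A *ᵥ x) = ∑ i, ∑ k, edgeEnergy s A x i k := by
  rw [dotProduct_signedLaplacian_mulVec s A x hA, two_mul]
  nth_rewrite 2 [Finset.sum_comm]
  rw [← Finset.sum_add_distrib]
  refine Finset.sum_congr rfl fun i _ => ?_
  rw [← Finset.sum_add_distrib]
  exact Finset.sum_congr rfl fun k _ =>
    add_swap_eq_edgeEnergy s A x (hAsymm k i) (hssymm k i) (hsq i k)

theorem edgeEnergy_eq_zero_of_mulVec_eq_zero (hA : ∀ i, A i i = 0)
    (hAsymm : ∀ i k, A i k = A k i) (hssymm : ∀ i k, s i k = s k i)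
    (hsA : ∀ i k, (s i k = 1 ∧ (A i k).PosSemidef) ∨ (s i k = -1 ∧ (-(A i k)).PosSemidef) ∨
      A i k = 0)
    (hx : signedLaplacian s A *ᵥ x = 0) (i k : ι) : edgeEnergy s A x i k = 0 := by
  have hsq : ∀ i k, s i k ^ 2 = 1 ∨ A i k = 0 := fun i k => by
    rcases hsA i k with ⟨h, _⟩ | ⟨h, _⟩ | h <;> simp [h]
  have hnonneg : ∀ i k, 0 ≤ edgeEnergy s A x i k := fun i k => edgeEnergy_nonneg s A x (hsA i k)
  have hsum : ∑ i, ∑ k, edgeEnergy s A x i k = 0 := by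
    rw [← two_mul_dotProduct_signedLaplacian_mulVec s A x hA hAsymm hssymm hsq, hx,
      dotProduct_zero, mul_zero]
  have hrow := (Fintype.sum_eq_zero_iff_of_nonneg fun i =>
    Finset.sum_nonneg fun k _ => hnonneg i k).mp hsum
  exact congrFun ((Fintype.sum_eq_zero_iff_of_nonneg (hnonneg i)).mp (congrFun hrow i)) k

omit [Fintype ι] [DecidableEq ι] in
theorem curry_eq_or_eq_neg_of_edgeEnergy_eq_zero {i k : ι} (hs : s i k = 1 ∨ s i k = -1)
    (hdef : (A i k).PosDef ∨ (-(A i k)).PosDef) (h : edgeEnergy s A x i k = 0) :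
    curry x i = curry x k ∨ curry x i = -curry x k := by
  have hs0 : s i k ≠ 0 := by rcases hs with h | h <;> norm_num [h]
  have hv := eq_zero_of_dotProduct_mulVec_self_eq_zero hdef
    ((mul_eq_zero.mp h).resolve_left hs0)
  rw [sub_eq_zero] at hv
  rcases hs with h | h <;> simp [hv, h]

end SignedLaplacian

theorem pn_spanning_tree_nullspace_gauge_form_general {n d : ℕ}
    (E : Fin n → Fin n → Prop)
    (hEirr : ∀ i, ¬ E i i)
    (A : Fin n → Fin n → Matrix (Fin d) (Fin d) ℝ)
    (hAsymm : ∀ i j, A i j = A j i)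
    (hA0 : ∀ i j, ¬ E i j → A i j = 0)
    (s : Fin n → Fin n → ℝ) (hssymm : ∀ i j, s i j = s j i)
    (hs : ∀ i j, E i j →
      (s i j = 1 ∧ (A i j).PosSemidef) ∨ (s i j = -1 ∧ (-(A i j)).PosSemidef))
    -- the positive-negative spanning tree
    (T : Fin n → Fin n → Prop)
    (hTE : ∀ i j, T i j → E i j)
    (hTdef : ∀ i j, T i j → (A i j).PosDef ∨ (-(A i j)).PosDef)
    (hTconn : ∀ p q : Fin n, Relation.ReflTransGen T p q)
    (L : Matrix (Fin n × Fin d) (Fin n × Fin d) ℝ)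
    (hL : L = Matrix.of fun p q =>
      if p.1 = q.1 then (∑ k, s p.1 k • A p.1 k) p.2 q.2 else -(A p.1 q.1 p.2 q.2))
    (x : Fin n × Fin d → ℝ) (hx : L.mulVec x = 0) :
    (∀ p q : Fin n,
        (fun a => x (p, a)) = (fun a => x (q, a)) ∨
        (fun a => x (p, a)) = fun a => -x (q, a)) ∧
    ∃ (σ : Fin n → ℝ) (w : Fin d → ℝ),
      (∀ i, σ i = 1 ∨ σ i = -1) ∧ x = fun p => σ p.1 * w p.2 := by
  have hAii : ∀ i, A i i = 0 := fun i => hA0 i i (hEirr i)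
  have hsA : ∀ i k, (s i k = 1 ∧ (A i k).PosSemidef) ∨ (s i k = -1 ∧ (-(A i k)).PosSemidef) ∨
      A i k = 0 := fun i k => by
    by_cases hE : E i k
    exacts [(hs i k hE).imp_right Or.inl, Or.inr (Or.inr (hA0 i k hE))]
  subst hL
  have hedge : ∀ i j, T i j → curry x i = curry x j ∨ curry x i = -curry x j := fun i j hT =>
    curry_eq_or_eq_neg_of_edgeEnergy_eq_zero s A x
      ((hs i j (hTE i j hT)).imp And.left And.left) (hTdef i j hT)
      (edgeEnergy_eq_zero_of_mulVec_eq_zero s A x hAii hAsymm hssymm hsA hx i j)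
  have hpair : ∀ p q, curry x p = curry x q ∨ curry x p = -curry x q := fun p q =>
    eq_or_eq_neg_of_reflTransGen hedge (hTconn p q)
  obtain ⟨σ, w, hσ, hw⟩ := exists_sign_smul_eq_of_forall_eq_or_eq_neg hpair
  exact ⟨hpair, σ, w, hσ, funext fun p => congrFun (hw p.1) p.2⟩

/-- For a matrix-weighted network containing a positive-negative spanning
tree `T` (a connected spanning subgraph all of whose edge weights are positive or
negative definite), every `x` in the null space of the matrix-valued Laplacian `L`
satisfies `x_p = x_q` or `x_p = −x_q` for all nodes `p, q`; consequently
`x = D(1_n ⊗ w)` for some gauge transformation `D` and some `w ∈ ℝ^d`. -/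
theorem pn_spanning_tree_nullspace_gauge_form {n d : ℕ}
    (E : Fin n → Fin n → Prop)
    (hEsymm : ∀ i j, E i j → E j i) (hEirr : ∀ i, ¬ E i i)
    (A : Fin n → Fin n → Matrix (Fin d) (Fin d) ℝ)
    (hAsymm : ∀ i j, A i j = A j i)
    (hA0 : ∀ i j, ¬ E i j → A i j = 0)
    (s : Fin n → Fin n → ℝ) (hssymm : ∀ i j, s i j = s j i)
    (hs : ∀ i j, E i j →
      (s i j = 1 ∧ (A i j).PosSemidef) ∨ (s i j = -1 ∧ (-(A i j)).PosSemidef))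
    -- the positive-negative spanning tree
    (T : Fin n → Fin n → Prop)
    (hTsymm : ∀ i j, T i j → T j i) (hTE : ∀ i j, T i j → E i j)
    (hTdef : ∀ i j, T i j → (A i j).PosDef ∨ (-(A i j)).PosDef)
    (hTconn : ∀ p q : Fin n, Relation.ReflTransGen T p q)
    (L : Matrix (Fin n × Fin d) (Fin n × Fin d) ℝ)
    (hL : L = Matrix.of fun p q =>
      if p.1 = q.1 then (∑ k, s p.1 k • A p.1 k) p.2 q.2 else -(A p.1 q.1 p.2 q.2))
    (x : Fin n × Fin d → ℝ) (hx : L.mulVec x = 0) :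
    (∀ p q : Fin n,
        (fun a => x (p, a)) = (fun a => x (q, a)) ∨
        (fun a => x (p, a)) = fun a => -x (q, a)) ∧
    ∃ (σ : Fin n → ℝ) (w : Fin d → ℝ),
      (∀ i, σ i = 1 ∨ σ i = -1) ∧ x = fun p => σ p.1 * w p.2 :=
  pn_spanning_tree_nullspace_gauge_form_general E hEirr A hAsymm hA0 s hssymm hs T hTE hTdef hTconn
    L hL x hx
end

section
/- Conversely, suppose G has a node bipartition (V₁, V₂) with balancing set E^b and a nonzero vector ξ ∈ ℝ^d lying in null(A_e) for every edge e in E^b. Let D be the gauge transformation with +I_d on V₁ and −I_d on V₂. Then D(1_n ⊗ ξ) ∈ null(L). -/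
/-- Conversely, suppose `G` has a node bipartition `(V₁, V₂)` (encoded by
`P : Fin n → Bool`) with balancing set `E^b` (edges negative semi-definite within a part
or positive semi-definite across parts), and a nonzero vector `ξ ∈ ℝ^d` lying in
`null(A_e)` for every edge `e ∈ E^b`.  Let `D` be the gauge transformation with `+I_d`
on `V₁` and `−I_d` on `V₂`.  Then `D(1_n ⊗ ξ) ∈ null(L)`. -/
theorem null_of_balancing_set_gives_gauge_in_nullspace {n d : ℕ}
    (E : Fin n → Fin n → Prop)
    (hEsymm : ∀ i j, E i j → E j i) (hEirr : ∀ i, ¬ E i i)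
    (A : Fin n → Fin n → Matrix (Fin d) (Fin d) ℝ)
    (hAsymm : ∀ i j, A i j = A j i)
    (hA0 : ∀ i j, ¬ E i j → A i j = 0)
    (s : Fin n → Fin n → ℝ) (hssymm : ∀ i j, s i j = s j i)
    (hs : ∀ i j, E i j →
      (s i j = 1 ∧ (A i j).PosSemidef) ∨ (s i j = -1 ∧ (-(A i j)).PosSemidef))
    (L : Matrix (Fin n × Fin d) (Fin n × Fin d) ℝ)
    (hL : L = Matrix.of fun p q =>
      if p.1 = q.1 then (∑ k, s p.1 k • A p.1 k) p.2 q.2 else -(A p.1 q.1 p.2 q.2))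
    (P : Fin n → Bool) (ξ : Fin d → ℝ) (hξ : ξ ≠ 0)
    (hnullb : ∀ l m, E l m →
      ((P l = P m ∧ (-(A l m)).PosSemidef) ∨ (P l ≠ P m ∧ (A l m).PosSemidef)) →
      (A l m).mulVec ξ = 0) :
    L.mulVec (fun p => (if P p.1 then (1 : ℝ) else -1) * ξ p.2) = 0 := by
  subst hL
  funext p
  obtain ⟨i, a⟩ := p
  set σ : Fin n → ℝ := fun j => if P j then (1 : ℝ) else -1 with hσ
  set M : Fin n → ℝ := fun j => ((A i j).mulVec ξ) a with hM
  have hAii : A i i = 0 := hA0 i i (hEirr i)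
  have hMi : M i = 0 := by simp [hM, hAii, Matrix.mulVec]
  -- key per-edge identity
  have key : ∀ j, σ i * (s i j * M j) = σ j * M j := by
    intro j
    by_cases hE : E i j
    · rcases hs i j hE with ⟨hs1, hpsd⟩ | ⟨hs1, hpsd⟩
      · by_cases hP : P i = P j
        · simp [hσ, hs1, hP]
        · have h0 : (A i j).mulVec ξ = 0 := hnullb i j hE (Or.inr ⟨fun h => hP h, hpsd⟩)
          simp [hM, h0]
      · by_cases hP : P i = P j
        · have h0 : (A i j).mulVec ξ = 0 := hnullb i j hE (Or.inl ⟨hP, hpsd⟩)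
          simp [hM, h0]
        · rcases Bool.eq_false_or_eq_true (P i) with hi | hi <;>
            rcases Bool.eq_false_or_eq_true (P j) with hj | hj <;>
            simp [hσ, hs1, hi, hj] at hP ⊢ <;> ring
    · have h0 : A i j = 0 := hA0 i j hE
      simp [hM, h0, Matrix.mulVec]
  -- compute the mulVec entry
  have hrow : ∀ j : Fin n,
      (∑ b, (if i = j then (∑ k, s i k • A i k) a b else -(A i j a b)) * (σ j * ξ b))
        = if i = j then (∑ k, σ i * (s i k * M k)) else -(σ j * M j) := by
    intro j
    by_cases hij : i = j
    · subst hij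
      simp only [eq_self_iff_true, if_true]
      simp only [Matrix.sum_apply, Matrix.smul_apply, smul_eq_mul, Finset.sum_mul]
      rw [Finset.sum_comm]
      refine Finset.sum_congr rfl fun k _ => ?_
      simp only [hM, Matrix.mulVec, dotProduct, Finset.mul_sum]
      refine Finset.sum_congr rfl fun b _ => by ring
    · simp only [hij, if_false]
      simp only [hM, Matrix.mulVec, dotProduct]
      rw [Finset.mul_sum, ← Finset.sum_neg_distrib]
      refine Finset.sum_congr rfl fun b _ => ?_
      ring
  show (∑ q : Fin n × Fin d,
      (if i = q.1 then (∑ k, s i k • A i k) a q.2 else -(A i q.1 a q.2)) * (σ q.1 * ξ q.2)) = 0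
  rw [Fintype.sum_prod_type]
  calc (∑ j, ∑ b, (if i = j then (∑ k, s i k • A i k) a b else -(A i j a b)) * (σ j * ξ b))
      = ∑ j, (if i = j then (∑ k, σ i * (s i k * M k)) else -(σ j * M j)) :=
        Finset.sum_congr rfl fun j _ => hrow j
    _ = 0 := by
        rw [← Finset.add_sum_erase _ _ (Finset.mem_univ i)]
        simp only [if_pos rfl]
        have h1 : (∑ k, σ i * (s i k * M k)) = ∑ k, σ k * M k :=
          Finset.sum_congr rfl fun k _ => key k
        have h2 : (∑ j ∈ Finset.univ.erase i,
            (if i = j then (∑ k, σ i * (s i k * M k)) else -(σ j * M j)))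
            = ∑ j ∈ Finset.univ.erase i, -(σ j * M j) := by
          refine Finset.sum_congr rfl fun j hj => ?_
          rw [if_neg (Ne.symm (Finset.ne_of_mem_erase hj))]
        rw [h2, h1, Finset.sum_neg_distrib,
          Finset.sum_erase_eq_sub (Finset.mem_univ i), hMi]
        simp
end
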